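/- Let ℤ carry the discrete topology and let f : ℤ → ℤ be the translation f(x) = x + 1. Then the ℤ-action n·x = fⁿ(x) = x + n is metric-independent expansive: for every metric d on ℤ compatible with the discrete topology there exists c > 0 such that for all distinct x, y ∈ ℤ there exists n ∈ ℤ with d(x + n, y + n) > c. -/
import Mathlib

/-- An action `φ` is expansive with respect to a distance function `d`. -/
def ExpansiveWith {G X : Type*} (φ : G → X → X) (d : X → X → ℝ) : Prop :=
  ∃ c > 0, ∀ x y : X, x ≠ y → ∃ g : G, c < d (φ g x) (φ g y)

/-- Metric-independent expansiveness: expansive with respect to every metric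
compatible with the topology. -/
def MIE {G X : Type*} [tX : TopologicalSpace X] (φ : G → X → X) : Prop :=
  ∀ m : MetricSpace X, m.toUniformSpace.toTopologicalSpace = tX →
    ExpansiveWith φ (fun x y => @dist X m.toDist x y)

/-- The translation `f(x) = x + 1` on `ℤ` (with the discrete topology) generates a
metric-independent expansive `ℤ`-action: for every compatible metric `d` there is
`c > 0` such that any two distinct integers are separated beyond `c` by some
translate. -/
theorem translation_int_mie : MIE (fun (n : ℤ) (x : ℤ) => x + n) := by
  intro m hm
  have hopen : @IsOpen ℤ m.toPseudoMetricSpace.toUniformSpace.toTopologicalSpace ({0} : Set ℤ) := by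
    rw [hm]; exact isOpen_discrete _
  obtain ⟨ε, hε, hball⟩ := (@Metric.isOpen_iff ℤ m.toPseudoMetricSpace _).mp hopen 0 rfl
  refine ⟨ε / 2, by linarith, fun x y hxy => ⟨-x, ?_⟩⟩
  simp only [add_neg_cancel]
  have hne : y + -x ≠ 0 := by
    intro h; apply hxy; omega
  have : y + -x ∉ @Metric.ball ℤ m.toPseudoMetricSpace 0 ε := fun h => hne (hball h)
  rw [@Metric.mem_ball ℤ m.toPseudoMetricSpace, not_lt] at this
  calc ε / 2 < ε := by linarith
    _ ≤ @dist ℤ m.toPseudoMetricSpace.toDist (y + -x) 0 := this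
    _ = @dist ℤ m.toPseudoMetricSpace.toDist 0 (y + -x) := @dist_comm ℤ m.toPseudoMetricSpace _ _
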